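/- Let 1 < p < ∞ and let w₁, w₂ : ℝ → (0,∞) be locally integrable with w₁ ∈ A_1^+ (M^- w₁ ≤ C₁ w₁ a.e.) and w₂ ∈ A_1^- (M^+ w₂ ≤ C₂ w₂ a.e.). Then w := w₁ w₂^{1-p} belongs to A_p^+: there is a constant C depending only on C₁, C₂, and p such that for all a ∈ ℝ and h > 0, (1/h ∫_{a-h}^a w)(1/h ∫_a^{a+h} w^{1-p'})^{p-1} ≤ C, where 1/p + 1/p' = 1. -/
import Mathlib

open MeasureTheory intervalIntegral

private lemma locInt_intervalIntegrable {f : ℝ → ℝ} (hf : LocallyIntegrable f volume)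
    (a b : ℝ) : IntervalIntegrable f volume a b := by
  rw [intervalIntegrable_iff]
  exact (hf.integrableOn_isCompact isCompact_uIcc).mono_set Set.uIoc_subset_uIcc

private lemma log_expand {h C A B e : ℝ} (hh : 0 < h) (hC : 0 < C) (hA : 0 < A) (hB : 0 < B) :
    Real.log (h⁻¹ * ((C⁻¹ * ((2 * h)⁻¹ * B)) ^ e * A)) =
      -Real.log h + (e * (-Real.log C + (-(Real.log 2 + Real.log h) + Real.log B)) + Real.log A) := by
  rw [Real.log_mul (by positivity) (by positivity),
    Real.log_mul (by positivity) (by positivity),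
    Real.log_rpow (by positivity),
    Real.log_mul (by positivity) (by positivity),
    Real.log_mul (by positivity) (by positivity),
    Real.log_inv, Real.log_inv, Real.log_inv,
    Real.log_mul two_ne_zero (ne_of_gt hh)]

/-- One-sided Jones factorization, easy direction: if `w₁ ∈ A_1^+` and
`w₂ ∈ A_1^-`, then `w₁ w₂^{1-p} ∈ A_p^+`. -/
theorem factorization_ap_plus (p p' : ℝ) (hp : 1 < p) (hp' : 1 / p + 1 / p' = 1)
    (w₁ w₂ : ℝ → ℝ) (hw₁ : ∀ x, 0 < w₁ x) (hw₂ : ∀ x, 0 < w₂ x)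
    (hloc₁ : LocallyIntegrable w₁ volume) (hloc₂ : LocallyIntegrable w₂ volume)
    (C₁ C₂ : ℝ)
    (hA1p : ∀ᵐ x : ℝ, ∀ h : ℝ, 0 < h →
      h⁻¹ * ∫ y in (x - h)..x, w₁ y ≤ C₁ * w₁ x)
    (hA1m : ∀ᵐ x : ℝ, ∀ h : ℝ, 0 < h →
      h⁻¹ * ∫ y in x..(x + h), w₂ y ≤ C₂ * w₂ x) :
    ∃ C : ℝ, ∀ a h : ℝ, 0 < h →
      (h⁻¹ * ∫ x in (a - h)..a, w₁ x * w₂ x ^ (1 - p)) *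
        (h⁻¹ * ∫ x in a..(a + h), (w₁ x * w₂ x ^ (1 - p)) ^ (1 - p')) ^ (p - 1) ≤ C := by
  have hp0 : (0:ℝ) < p := by linarith
  have hpne : p ≠ 0 := ne_of_gt hp0
  have hp'ne : p' ≠ 0 := by
    intro hz
    rw [hz, div_zero, add_zero] at hp'
    have : p = 1 := by field_simp at hp'; linarith
    linarith
  have hsum : p + p' = p * p' := by field_simp at hp'; linarith
  have hkey : (1 - p) * (1 - p') = 1 := by nlinarith [hsum]
  have hp'neg : 1 - p' < 0 := by nlinarith [hkey]
  -- positivity of C₁, C₂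
  have hC₁pos : 0 < C₁ := by
    obtain ⟨x, hx⟩ := hA1p.exists
    have h1 := hx 1 one_pos
    have hpos : 0 < ∫ y in (x-1)..x, w₁ y :=
      intervalIntegral_pos_of_pos (locInt_intervalIntegrable hloc₁ _ _) hw₁ (by linarith)
    have := hw₁ x
    rw [inv_one, one_mul] at h1
    nlinarith
  have hC₂pos : 0 < C₂ := by
    obtain ⟨x, hx⟩ := hA1m.exists
    have h1 := hx 1 one_pos
    have hpos : 0 < ∫ y in x..(x+1), w₂ y :=
      intervalIntegral_pos_of_pos (locInt_intervalIntegrable hloc₂ _ _) hw₂ (by linarith)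
    have := hw₂ x
    rw [inv_one, one_mul] at h1
    nlinarith
  refine ⟨2 ^ p * C₁ * C₂ ^ (p - 1), fun a h hh => ?_⟩
  set A : ℝ := ∫ x in (a - h)..a, w₁ x with hAdef
  set B : ℝ := ∫ x in a..(a + h), w₂ x with hBdef
  have hA : 0 < A :=
    intervalIntegral_pos_of_pos (locInt_intervalIntegrable hloc₁ _ _) hw₁ (by linarith)
  have hB : 0 < B :=
    intervalIntegral_pos_of_pos (locInt_intervalIntegrable hloc₂ _ _) hw₂ (by linarith)
  set Al : ℝ := C₁⁻¹ * ((2 * h)⁻¹ * A) with hAldef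
  set Bl : ℝ := C₂⁻¹ * ((2 * h)⁻¹ * B) with hBldef
  have hAl : 0 < Al := by positivity
  have hBl : 0 < Bl := by positivity
  -- a.e. lower bound for w₂ on Ioc (a-h) a
  have hlow₂ : ∀ᵐ x : ℝ, x ∈ Set.Ioc (a - h) a → Bl ≤ w₂ x := by
    filter_upwards [hA1m] with x hx hmem
    obtain ⟨hx1, hx2⟩ := hmem
    have h1 := hx (a + h - x) (by linarith)
    have he : x + (a + h - x) = a + h := by ring
    rw [he] at h1
    have hsplit : (∫ y in x..a, w₂ y) + ∫ y in a..(a+h), w₂ y = ∫ y in x..(a+h), w₂ y :=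
      integral_add_adjacent_intervals (locInt_intervalIntegrable hloc₂ _ _)
        (locInt_intervalIntegrable hloc₂ _ _)
    have hnn : 0 ≤ ∫ y in x..a, w₂ y :=
      integral_nonneg hx2 (fun u _ => (hw₂ u).le)
    have hint_ge : B ≤ ∫ y in x..(a+h), w₂ y := by rw [← hsplit]; linarith
    have hd : 0 < a + h - x := by linarith
    have hd2 : a + h - x ≤ 2 * h := by linarith
    have hinv : (2 * h)⁻¹ ≤ (a + h - x)⁻¹ := by
      apply inv_anti₀ hd hd2
    have hBnn : 0 ≤ B := hB.le
    have hchain : (2 * h)⁻¹ * B ≤ (a + h - x)⁻¹ * ∫ y in x..(a+h), w₂ y := by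
      apply mul_le_mul hinv hint_ge hBnn (by positivity)
    have : (2 * h)⁻¹ * B ≤ C₂ * w₂ x := le_trans hchain h1
    rw [hBldef]
    rw [inv_mul_le_iff₀ hC₂pos]
    linarith
  -- a.e. lower bound for w₁ on Ioc a (a+h)
  have hlow₁ : ∀ᵐ x : ℝ, x ∈ Set.Ioc a (a + h) → Al ≤ w₁ x := by
    filter_upwards [hA1p] with x hx hmem
    obtain ⟨hx1, hx2⟩ := hmem
    have h1 := hx (x - (a - h)) (by linarith)
    have he : x - (x - (a - h)) = a - h := by ring
    rw [he] at h1
    have hsplit : (∫ y in (a-h)..a, w₁ y) + ∫ y in a..x, w₁ y = ∫ y in (a-h)..x, w₁ y :=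
      integral_add_adjacent_intervals (locInt_intervalIntegrable hloc₁ _ _)
        (locInt_intervalIntegrable hloc₁ _ _)
    have hnn : 0 ≤ ∫ y in a..x, w₁ y :=
      integral_nonneg hx1.le (fun u _ => (hw₁ u).le)
    have hint_ge : A ≤ ∫ y in (a-h)..x, w₁ y := by rw [← hsplit]; linarith
    have hd : 0 < x - (a - h) := by linarith
    have hd2 : x - (a - h) ≤ 2 * h := by linarith
    have hinv : (2 * h)⁻¹ ≤ (x - (a - h))⁻¹ := inv_anti₀ hd hd2
    have hchain : (2 * h)⁻¹ * A ≤ (x - (a - h))⁻¹ * ∫ y in (a-h)..x, w₁ y :=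
      mul_le_mul hinv hint_ge hA.le (by positivity)
    have : (2 * h)⁻¹ * A ≤ C₁ * w₁ x := le_trans hchain h1
    rw [hAldef, inv_mul_le_iff₀ hC₁pos]
    linarith
  -- first integral bound
  have hIone : (∫ x in (a - h)..a, w₁ x * w₂ x ^ (1 - p)) ≤ Bl ^ (1 - p) * A := by
    have hle : a - h ≤ a := by linarith
    rw [integral_of_le hle, hAdef, integral_of_le hle, ← MeasureTheory.integral_const_mul]
    have hw₁int : IntegrableOn w₁ (Set.Ioc (a-h) a) volume :=
      (hloc₁.integrableOn_isCompact isCompact_Icc).mono_set Set.Ioc_subset_Icc_self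
    have hgint : IntegrableOn (fun x => Bl ^ (1 - p) * w₁ x) (Set.Ioc (a-h) a) volume :=
      hw₁int.const_mul _
    have hmeas : AEStronglyMeasurable (fun x => w₁ x * w₂ x ^ (1 - p))
        (volume.restrict (Set.Ioc (a-h) a)) := by
      exact (hloc₁.aestronglyMeasurable.restrict.aemeasurable.mul
        ((hloc₂.aestronglyMeasurable.restrict.aemeasurable).pow
          aemeasurable_const)).aestronglyMeasurable
    have hptwise : ∀ᵐ x : ℝ, x ∈ Set.Ioc (a - h) a →
        w₁ x * w₂ x ^ (1 - p) ≤ Bl ^ (1 - p) * w₁ x := by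
      filter_upwards [hlow₂] with x hx hmem
      have h2 : w₂ x ^ (1 - p) ≤ Bl ^ (1 - p) :=
        Real.rpow_le_rpow_of_nonpos hBl (hx hmem) (by linarith)
      calc w₁ x * w₂ x ^ (1 - p) ≤ w₁ x * Bl ^ (1 - p) :=
            mul_le_mul_of_nonneg_left h2 (hw₁ x).le
        _ = Bl ^ (1 - p) * w₁ x := mul_comm _ _
    have hfint : IntegrableOn (fun x => w₁ x * w₂ x ^ (1 - p)) (Set.Ioc (a-h) a) volume := by
      apply Integrable.mono' hgint hmeas
      filter_upwards [(ae_restrict_iff' measurableSet_Ioc).mpr hptwise,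
        self_mem_ae_restrict (measurableSet_Ioc : MeasurableSet (Set.Ioc (a-h) a))]
          with x hx hmem
      rw [Real.norm_eq_abs,
        abs_of_nonneg (mul_nonneg (hw₁ x).le (Real.rpow_nonneg (hw₂ x).le _))]
      exact hx
    exact setIntegral_mono_on_ae hfint hgint measurableSet_Ioc hptwise
  -- second integral bound
  have hItwo : (∫ x in a..(a + h), (w₁ x * w₂ x ^ (1 - p)) ^ (1 - p')) ≤ Al ^ (1 - p') * B := by
    have hle : a ≤ a + h := by linarith
    rw [integral_of_le hle, hBdef, integral_of_le hle, ← MeasureTheory.integral_const_mul]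
    have hw₂int : IntegrableOn w₂ (Set.Ioc a (a+h)) volume :=
      (hloc₂.integrableOn_isCompact isCompact_Icc).mono_set Set.Ioc_subset_Icc_self
    have hgint : IntegrableOn (fun x => Al ^ (1 - p') * w₂ x) (Set.Ioc a (a+h)) volume :=
      hw₂int.const_mul _
    have heq : ∀ x : ℝ, (w₁ x * w₂ x ^ (1 - p)) ^ (1 - p') = w₁ x ^ (1 - p') * w₂ x := by
      intro x
      rw [Real.mul_rpow (hw₁ x).le (Real.rpow_nonneg (hw₂ x).le _), ← Real.rpow_mul (hw₂ x).le, hkey,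
        Real.rpow_one]
    have hmeas : AEStronglyMeasurable (fun x => (w₁ x * w₂ x ^ (1 - p)) ^ (1 - p'))
        (volume.restrict (Set.Ioc a (a+h))) := by
      simp only [heq]
      exact ((hloc₁.aestronglyMeasurable.restrict.aemeasurable.pow aemeasurable_const).mul
        hloc₂.aestronglyMeasurable.restrict.aemeasurable).aestronglyMeasurable
    have hptwise : ∀ᵐ x : ℝ, x ∈ Set.Ioc a (a + h) →
        (w₁ x * w₂ x ^ (1 - p)) ^ (1 - p') ≤ Al ^ (1 - p') * w₂ x := by
      filter_upwards [hlow₁] with x hx hmem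
      rw [heq x]
      have h2 : w₁ x ^ (1 - p') ≤ Al ^ (1 - p') :=
        Real.rpow_le_rpow_of_nonpos hAl (hx hmem) hp'neg.le
      exact mul_le_mul_of_nonneg_right h2 (hw₂ x).le
    have hfint : IntegrableOn (fun x => (w₁ x * w₂ x ^ (1 - p)) ^ (1 - p'))
        (Set.Ioc a (a+h)) volume := by
      apply Integrable.mono' hgint hmeas
      filter_upwards [(ae_restrict_iff' measurableSet_Ioc).mpr hptwise,
        self_mem_ae_restrict (measurableSet_Ioc : MeasurableSet (Set.Ioc a (a+h)))]
          with x hx hmem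
      rw [Real.norm_eq_abs, abs_of_nonneg
        (Real.rpow_nonneg (mul_nonneg (hw₁ x).le (Real.rpow_nonneg (hw₂ x).le _)) _)]
      exact hx
    exact setIntegral_mono_on_ae hfint hgint measurableSet_Ioc hptwise
  -- combine
  have hnn1 : 0 ≤ ∫ x in (a - h)..a, w₁ x * w₂ x ^ (1 - p) :=
    integral_nonneg (by linarith)
      (fun u _ => mul_nonneg (hw₁ u).le (Real.rpow_nonneg (hw₂ u).le _))
  have hnn2 : 0 ≤ ∫ x in a..(a + h), (w₁ x * w₂ x ^ (1 - p)) ^ (1 - p') :=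
    integral_nonneg (by linarith)
      (fun u _ => Real.rpow_nonneg (mul_nonneg (hw₁ u).le (Real.rpow_nonneg (hw₂ u).le _)) _)
  have hT1 : h⁻¹ * ∫ x in (a - h)..a, w₁ x * w₂ x ^ (1 - p) ≤ h⁻¹ * (Bl ^ (1 - p) * A) :=
    mul_le_mul_of_nonneg_left hIone (by positivity)
  have hT2 : (h⁻¹ * ∫ x in a..(a + h), (w₁ x * w₂ x ^ (1 - p)) ^ (1 - p')) ^ (p - 1)
      ≤ (h⁻¹ * (Al ^ (1 - p') * B)) ^ (p - 1) :=
    Real.rpow_le_rpow (by positivity) (mul_le_mul_of_nonneg_left hItwo (by positivity))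
      (by linarith)
  have hmain : (h⁻¹ * ∫ x in (a - h)..a, w₁ x * w₂ x ^ (1 - p)) *
      (h⁻¹ * ∫ x in a..(a + h), (w₁ x * w₂ x ^ (1 - p)) ^ (1 - p')) ^ (p - 1)
      ≤ (h⁻¹ * (Bl ^ (1 - p) * A)) * (h⁻¹ * (Al ^ (1 - p') * B)) ^ (p - 1) :=
    mul_le_mul hT1 hT2 (by positivity) (by positivity)
  refine le_trans hmain (le_of_eq ?_)
  -- final constant computation via logs
  have hL : Real.log ((h⁻¹ * (Bl ^ (1 - p) * A)) * (h⁻¹ * (Al ^ (1 - p') * B)) ^ (p - 1))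
      = Real.log (2 ^ p * C₁ * C₂ ^ (p - 1)) := by
    rw [Real.log_mul (by positivity) (by positivity), Real.log_rpow (by positivity),
      hAldef, hBldef, log_expand hh hC₂pos hA hB, log_expand hh hC₁pos hB hA,
      Real.log_mul (by positivity) (ne_of_gt (Real.rpow_pos_of_pos hC₂pos _)),
      Real.log_mul (by positivity) (ne_of_gt hC₁pos),
      Real.log_rpow two_pos, Real.log_rpow hC₂pos]
    linear_combination (Real.log C₁ + Real.log 2 + Real.log h - Real.log A) * hkey
  have := Real.exp_log (show (0:ℝ) <
      (h⁻¹ * (Bl ^ (1 - p) * A)) * (h⁻¹ * (Al ^ (1 - p') * B)) ^ (p - 1) by positivity)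
  rw [← this, hL, Real.exp_log (by positivity)]
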